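/- Let H = ℂ^{d₁} ⊗ ⋯ ⊗ ℂ^{d_N}, and for each i ∈ {1, …, K} (K ≥ 2) let P⁽ⁱ⁾ = {ψ_j⁽ⁱ⁾ : 1 ≤ j ≤ n⁽ⁱ⁾} be an unextendible product basis of H. Then the set P = {ψ_j⁽ⁱ⁾ ⊗ e_{i} : 1 ≤ i ≤ K, 1 ≤ j ≤ n⁽ⁱ⁾}, where {e_i} is the standard orthonormal basis of ℂ^K, is an unextendible product basis of H ⊗ ℂ^K. -/

import Mathlib

open scoped Classical

/-- The fully product vector of `ℂ^{d₁} ⊗ ⋯ ⊗ ℂ^{d_N}` (modelled as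
`EuclideanSpace ℂ (Π i, Fin (d i))`) with local factors `φ i`. -/
noncomputable def prodVec {N : ℕ} {d : Fin N → ℕ} (φ : ∀ i, Fin (d i) → ℂ) :
    EuclideanSpace ℂ (∀ i, Fin (d i)) :=
  WithLp.toLp 2 (fun x => ∏ i, φ i (x i))

/-- An unextendible product basis of the multipartite space
`ℂ^{d₁} ⊗ ⋯ ⊗ ℂ^{d_N}`: pairwise orthonormal fully product vectors, fewer than
`d₁⋯d_N` of them, with no nonzero fully product vector orthogonal to all. -/
def IsUPB {N : ℕ} {d : Fin N → ℕ} (S : Finset (EuclideanSpace ℂ (∀ i, Fin (d i)))) : Prop :=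
  (∀ ψ ∈ S, ∃ φ, ψ = prodVec φ) ∧
  (∀ ψ ∈ S, ∀ χ ∈ S, (inner ℂ ψ χ : ℂ) = if ψ = χ then 1 else 0) ∧
  S.card < ∏ i, d i ∧
  ∀ φ : ∀ i, Fin (d i) → ℂ, prodVec φ ≠ 0 →
    ¬ (∀ ψ ∈ S, (inner ℂ ψ (prodVec φ) : ℂ) = 0)

/-- The fully product vector of `(ℂ^{d₁} ⊗ ⋯ ⊗ ℂ^{d_N}) ⊗ ℂ^K`. -/
noncomputable def prodVecExt {N K : ℕ} {d : Fin N → ℕ}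
    (φ : ∀ i, Fin (d i) → ℂ) (χ : Fin K → ℂ) :
    EuclideanSpace ℂ ((∀ i, Fin (d i)) × Fin K) :=
  WithLp.toLp 2 (fun p => (∏ i, φ i (p.1 i)) * χ p.2)

/-- An unextendible product basis of `(ℂ^{d₁} ⊗ ⋯ ⊗ ℂ^{d_N}) ⊗ ℂ^K`. -/
def IsUPBExt {N K : ℕ} {d : Fin N → ℕ}
    (S : Finset (EuclideanSpace ℂ ((∀ i, Fin (d i)) × Fin K))) : Prop :=
  (∀ ψ ∈ S, ∃ φ χ, ψ = prodVecExt φ χ) ∧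
  (∀ ψ ∈ S, ∀ χ ∈ S, (inner ℂ ψ χ : ℂ) = if ψ = χ then 1 else 0) ∧
  S.card < (∏ i, d i) * K ∧
  ∀ (φ : ∀ i, Fin (d i) → ℂ) (χ : Fin K → ℂ), prodVecExt φ χ ≠ 0 →
    ¬ (∀ ψ ∈ S, (inner ℂ ψ (prodVecExt φ χ) : ℂ) = 0)

/-- The map `ψ ↦ ψ ⊗ e_i` into `(ℂ^{d₁} ⊗ ⋯ ⊗ ℂ^{d_N}) ⊗ ℂ^K`. -/
noncomputable def tensorBasisVec {N K : ℕ} {d : Fin N → ℕ} (i : Fin K)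
    (ψ : EuclideanSpace ℂ (∀ i, Fin (d i))) :
    EuclideanSpace ℂ ((∀ i, Fin (d i)) × Fin K) :=
  WithLp.toLp 2 (fun p => ψ p.1 * (if p.2 = i then 1 else 0))

/-!
Pairing with `ψ ⊗ e_i` only sees the `e_i`-component: `⟪ψ ⊗ e_i, φ ⊗ χ⟫ = χ_i ⟪ψ, φ⟫`.
Hence orthonormality passes from each `P⁽ⁱ⁾` to the union, and a nonzero product vector
`φ ⊗ χ` orthogonal to the union would, for any `k` with `χ_k ≠ 0`, make `φ` orthogonal to
all of `P⁽ᵏ⁾`. The count is `∑ |P⁽ⁱ⁾| < K · d₁⋯d_N`.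
-/

section

variable {N K : ℕ} {d : Fin N → ℕ}

theorem inner_tensorBasisVec (i j : Fin K) (a b : EuclideanSpace ℂ (∀ i, Fin (d i))) :
    (inner ℂ (tensorBasisVec i a) (tensorBasisVec j b) : ℂ) =
      if i = j then inner ℂ a b else 0 := by
  simp only [PiLp.inner_apply, RCLike.inner_apply, tensorBasisVec, Fintype.sum_prod_type]
  split_ifs with h
  · subst h
    refine Finset.sum_congr rfl fun x _ => ?_
    simp [apply_ite, Finset.sum_ite_eq']
  · refine Finset.sum_eq_zero fun x _ => Finset.sum_eq_zero fun k _ => ?_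
    by_cases hk : k = i <;> simp [hk, h]

theorem inner_tensorBasisVec_prodVecExt (i : Fin K) (a : EuclideanSpace ℂ (∀ i, Fin (d i)))
    (φ : ∀ i, Fin (d i) → ℂ) (χ : Fin K → ℂ) :
    (inner ℂ (tensorBasisVec i a) (prodVecExt φ χ) : ℂ) = χ i * inner ℂ a (prodVec φ) := by
  simp only [PiLp.inner_apply, RCLike.inner_apply, tensorBasisVec, prodVecExt, prodVec,
    Fintype.sum_prod_type, Finset.mul_sum]
  refine Finset.sum_congr rfl fun x _ => ?_
  simp [apply_ite, Finset.sum_ite_eq', mul_comm, mul_left_comm]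

theorem tensorBasisVec_prodVec (i : Fin K) (φ : ∀ i, Fin (d i) → ℂ) :
    tensorBasisVec i (prodVec φ) = prodVecExt φ (Pi.single i 1) := by
  ext p
  simp [tensorBasisVec, prodVecExt, prodVec, Pi.single_apply]

theorem tensorBasisVec_injective (i : Fin K) : Function.Injective (tensorBasisVec (d := d) i) := by
  intro a b h
  ext x
  simpa [tensorBasisVec] using congrArg (· (x, i)) h

theorem prodVecExt_eq_zero_iff (φ : ∀ i, Fin (d i) → ℂ) (χ : Fin K → ℂ) :
    prodVecExt φ χ = 0 ↔ prodVec φ = 0 ∨ χ = 0 := by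
  constructor
  · intro h
    by_contra! hne
    obtain ⟨x, hx⟩ : ∃ x, prodVec φ x ≠ 0 := by
      by_contra! hx
      exact hne.1 (PiLp.ext hx)
    obtain ⟨k, hk⟩ := Function.ne_iff.1 hne.2
    have := congrArg (· (x, k)) h
    simp only [prodVecExt, prodVec, PiLp.toLp_apply, PiLp.zero_apply] at this hx
    exact mul_ne_zero hx hk this
  · rintro (h | rfl) <;> ext p
    · simpa [prodVecExt, prodVec] using Or.inl (congrArg (· p.1) h)
    · simp [prodVecExt]

noncomputable def tensorBasisUnion (P : Fin K → Finset (EuclideanSpace ℂ (∀ i, Fin (d i)))) :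
    Finset (EuclideanSpace ℂ ((∀ i, Fin (d i)) × Fin K)) :=
  Finset.univ.biUnion fun i => (P i).image (tensorBasisVec i)

variable {P : Fin K → Finset (EuclideanSpace ℂ (∀ i, Fin (d i)))}

theorem mem_tensorBasisUnion {ψ : EuclideanSpace ℂ ((∀ i, Fin (d i)) × Fin K)} :
    ψ ∈ tensorBasisUnion P ↔ ∃ i, ∃ a ∈ P i, tensorBasisVec i a = ψ := by
  simp [tensorBasisUnion]

theorem tensorBasisUnion_isProduct (hP : ∀ i, ∀ ψ ∈ P i, ∃ φ, ψ = prodVec φ) :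
    ∀ ψ ∈ tensorBasisUnion P, ∃ φ χ, ψ = prodVecExt φ χ := by
  rintro _ hψ
  obtain ⟨i, a, ha, rfl⟩ := mem_tensorBasisUnion.1 hψ
  obtain ⟨φ, rfl⟩ := hP i a ha
  exact ⟨φ, Pi.single i 1, tensorBasisVec_prodVec i φ⟩

theorem tensorBasisUnion_orthonormal
    (hP : ∀ i, ∀ ψ ∈ P i, ∀ χ ∈ P i, (inner ℂ ψ χ : ℂ) = if ψ = χ then 1 else 0) :
    ∀ ψ ∈ tensorBasisUnion P, ∀ χ ∈ tensorBasisUnion P,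
      (inner ℂ ψ χ : ℂ) = if ψ = χ then 1 else 0 := by
  rintro _ hψ _ hχ
  obtain ⟨i, a, ha, rfl⟩ := mem_tensorBasisUnion.1 hψ
  obtain ⟨j, b, hb, rfl⟩ := mem_tensorBasisUnion.1 hχ
  rw [inner_tensorBasisVec]
  by_cases hij : i = j
  · subst hij
    simp only [if_true, hP i a ha b hb, (tensorBasisVec_injective i).eq_iff]
  · -- equal vectors would have inner product `⟪a, a⟫ = 1` and `0` at once
    have hne : tensorBasisVec i a ≠ tensorBasisVec j b := by
      intro h
      have h0 := inner_tensorBasisVec i j a b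
      rw [← h, inner_tensorBasisVec, if_pos rfl, if_neg hij, hP i a ha a ha, if_pos rfl] at h0
      exact one_ne_zero h0
    simp [hij, hne]

theorem card_tensorBasisUnion_lt [NeZero K] (hP : ∀ i, (P i).card < ∏ i, d i) :
    (tensorBasisUnion P).card < (∏ i, d i) * K :=
  calc (tensorBasisUnion P).card
      ≤ ∑ i, ((P i).image (tensorBasisVec i)).card := Finset.card_biUnion_le
    _ ≤ ∑ i, (P i).card := Finset.sum_le_sum fun i _ => Finset.card_image_le
    _ < ∑ _i : Fin K, ∏ i, d i := Finset.sum_lt_sum_of_nonempty Finset.univ_nonempty fun i _ => hP i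
    _ = (∏ i, d i) * K := by simp [mul_comm]

theorem tensorBasisUnion_unextendible
    (hP : ∀ i, ∀ φ : ∀ i, Fin (d i) → ℂ, prodVec φ ≠ 0 →
      ¬ (∀ ψ ∈ P i, (inner ℂ ψ (prodVec φ) : ℂ) = 0))
    (φ : ∀ i, Fin (d i) → ℂ) (χ : Fin K → ℂ) (hne : prodVecExt φ χ ≠ 0) :
    ¬ (∀ ψ ∈ tensorBasisUnion P, (inner ℂ ψ (prodVecExt φ χ) : ℂ) = 0) := by
  intro horth
  obtain ⟨hφ, hχ⟩ := not_or.1 ((prodVecExt_eq_zero_iff φ χ).not.1 hne)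
  obtain ⟨k, hk⟩ := Function.ne_iff.1 hχ
  refine hP k φ hφ fun a ha => ?_
  have h := horth _ (mem_tensorBasisUnion.2 ⟨k, a, ha, rfl⟩)
  rw [inner_tensorBasisVec_prodVecExt] at h
  exact (mul_eq_zero.1 h).resolve_left hk

end

/-- If `P⁽ⁱ⁾` is a UPB of `H = ℂ^{d₁} ⊗ ⋯ ⊗ ℂ^{d_N}` for each `i ∈ Fin K`
(`K ≥ 2`), then `{ψ ⊗ e_i : ψ ∈ P⁽ⁱ⁾}` is a UPB of `H ⊗ ℂ^K`. -/
theorem upb_of_family_of_upbs {N K : ℕ} {d : Fin N → ℕ} (hK : 2 ≤ K)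
    (P : Fin K → Finset (EuclideanSpace ℂ (∀ i, Fin (d i))))
    (hP : ∀ i, IsUPB (P i)) :
    IsUPBExt (Finset.univ.biUnion fun i : Fin K => (P i).image (tensorBasisVec i)) := by
  have : NeZero K := ⟨by omega⟩
  exact ⟨tensorBasisUnion_isProduct fun i => (hP i).1,
    tensorBasisUnion_orthonormal fun i => (hP i).2.1,
    card_tensorBasisUnion_lt fun i => (hP i).2.2.1,
    tensorBasisUnion_unextendible fun i => (hP i).2.2.2⟩
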